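/- arXiv:1710.07866 — 3 statements merged into one kernel-verified Lean document; each statement's English description precedes it below -/
import Mathlib

section
/- In the worst-case column-filling schedule, the k-th particle of the first column (0-indexed) is in place after at most 17 + 5·max(k−1, 0) parallel rounds, so the first column of height h completes in O(h) rounds. -/
/-- In the worst-case column-filling schedule, with `T 0 = 15`, `T 1 = 17`,
and `T (k+1) ≤ T k + 5` for `k ≥ 1`, the `k`-th particle of the first column is in place
after at most `17 + 5·max(k-1,0)` parallel rounds; hence the first column of height `h`
completes in `T (h-1) ≤ 17 + 5(h-2)` rounds for `h ≥ 2`, which is `O(h)`. -/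
theorem stmt_8 (T : ℕ → ℕ) (h0 : T 0 = 15) (h1 : T 1 = 17)
    (hstep : ∀ k, 1 ≤ k → T (k + 1) ≤ T k + 5) :
    (∀ k, T k ≤ 17 + 5 * (k - 1)) ∧
    (∀ h : ℕ, 2 ≤ h → T (h - 1) ≤ 17 + 5 * (h - 2)) ∧
    (∃ C : ℕ, 0 < C ∧ ∀ h : ℕ, 1 ≤ h → T (h - 1) ≤ C * h) := by
  have main : ∀ k, T k ≤ 17 + 5 * (k - 1) := by
    intro k
    induction k with
    | zero => simp [h0]
    | succ n ih =>
      match n, ih with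
      | 0, _ => simp [h1]
      | (m+1), ih =>
        calc T (m + 1 + 1) ≤ T (m + 1) + 5 := hstep _ (Nat.le_add_left 1 m)
          _ ≤ 17 + 5 * (m + 1 - 1) + 5 := by omega
          _ = 17 + 5 * (m + 1 + 1 - 1) := by omega
  refine ⟨main, fun h hh => ?_, 22, by norm_num, fun h hh => ?_⟩
  · have := main (h - 1); omega
  · have := main (h - 1); omega
end

section
/- In the Canny edge detection implementation on the particle grid, every particle's output depends only on pixel values within graph distance 4 of that particle, so after image setup the computation completes in a constant number of rounds independent of image dimensions. -/
private lemma dist_tri {V : Type} (G : SimpleGraph V) {u w v : V}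
    (hu : G.Reachable u w) (hw : G.Reachable w v) :
    G.dist u v ≤ G.dist u w + G.dist w v := by
  obtain ⟨p, hp⟩ := hu.exists_walk_length_eq_dist
  obtain ⟨q, hq⟩ := hw.exists_walk_length_eq_dist
  calc G.dist u v ≤ (p.append q).length := SimpleGraph.dist_le _
    _ = _ := by rw [SimpleGraph.Walk.length_append, hp, hq]

private lemma step {V : Type} (G : SimpleGraph V) (F : (V → ℝ) → (V → ℝ))
    (hF : ∀ (f g : V → ℝ) (w : V), (∀ u, (G.Adj u w ∨ u = w) → f u = g u) → F f w = F g w)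
    (n : ℕ) (f g : V → ℝ) (v : V)
    (h : ∀ u, G.Reachable u v → G.dist u v ≤ n + 1 → f u = g u) :
    ∀ w, G.Reachable w v → G.dist w v ≤ n → F f w = F g w := by
  intro w hw hwd
  apply hF
  intro u hu
  rcases hu with hadj | rfl
  · refine h u (hadj.reachable.trans hw) ?_
    have h1 : G.dist u w = 1 := SimpleGraph.dist_eq_one_iff_adj.mpr hadj
    have := dist_tri G hadj.reachable hw
    omega
  · exact h u hw (by omega)

/-- Canny edge detection on the particle grid is the composition of `k = 4`
radius-1 local operations (Gaussian smoothing, Sobel, non-maximum suppression, hysteresis),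
so every particle's output depends only on pixel values within graph distance 4 of that
particle; hence the computation takes a constant number of rounds independent of image
dimensions. Formally: if `F₁, F₂, F₃, F₄` are radius-1 local operations on a graph `G`
(the output at `v` depends only on values at `v` and its neighbors), then the composed
output at `v` agrees on any two inputs agreeing within distance 4 of `v`. -/
theorem stmt_12 {V : Type} (G : SimpleGraph V)
    (F₁ F₂ F₃ F₄ : (V → ℝ) → (V → ℝ))
    (hlocal : ∀ F ∈ [F₁, F₂, F₃, F₄], ∀ (f g : V → ℝ) (v : V),
      (∀ u, (G.Adj u v ∨ u = v) → f u = g u) → F f v = F g v) :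
    ∀ (f g : V → ℝ) (v : V),
      (∀ u, G.Reachable u v → G.dist u v ≤ 4 → f u = g u) →
      F₄ (F₃ (F₂ (F₁ f))) v = F₄ (F₃ (F₂ (F₁ g))) v := by
  intro f g v h
  have h1 := step G F₁ (hlocal F₁ (by simp)) 3 f g v h
  have h2 := step G F₂ (hlocal F₂ (by simp)) 2 _ _ v h1
  have h3 := step G F₃ (hlocal F₃ (by simp)) 1 _ _ v h2
  have h4 := step G F₄ (hlocal F₄ (by simp)) 0 _ _ v h3
  exact h4 v (SimpleGraph.Reachable.refl v) (by simp)
end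

section
/- In the binary counter, if the seed emits exactly v carry tokens and the counter runs to quiescence, the final displayed value (sum over j of display_j · 2^j) equals v, assuming v ≤ 2^n − 1 for n digit particles. -/
/-- A carry step: replace two tokens at position `j` by one token at position `j+1`. -/
def carryStep (t t' : ℕ → ℕ) : Prop :=
  ∃ j, 2 ≤ t j ∧ t' j = t j - 2 ∧ t' (j + 1) = t (j + 1) + 1 ∧
    ∀ k, k ≠ j → k ≠ j + 1 → t' k = t k

/-!
A carry step at position `j` trades `2 · 2^j` for `2^(j+1)`, so it leaves every partial sum
`∑_{k < N} t_k 2^k` with `N ≥ j + 2` unchanged. Hence along any run all partial sums are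
eventually those of the seed configuration, which are all `v`; a final configuration supported
below `n` has its partial sums eventually equal to its displayed value, which is therefore `v`.
-/

open Filter Finset

namespace carryStep

theorem eventually_sum_range_eq {t t' : ℕ → ℕ} (h : carryStep t t') :
    ∀ᶠ N in atTop, ∑ k ∈ range N, t' k * 2 ^ k = ∑ k ∈ range N, t k * 2 ^ k := by
  obtain ⟨j, htj, ht'j, ht'j₁, hother⟩ := h
  refine eventually_atTop.2 ⟨j + 2, fun N hN => ?_⟩
  induction N, hN using Nat.le_induction with
  | base =>
    have hlow : ∑ k ∈ range j, t' k * 2 ^ k = ∑ k ∈ range j, t k * 2 ^ k :=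
      sum_congr rfl fun k hk => by rw [hother k (by simp at hk; omega) (by simp at hk; omega)]
    obtain ⟨a, ha⟩ : ∃ a, t j = a + 2 := ⟨t j - 2, by omega⟩
    simp only [sum_range_succ, hlow, ht'j, ht'j₁, ha, Nat.add_sub_cancel]
    ring
  | succ N hN ih =>
    rw [sum_range_succ, sum_range_succ, ih, hother N (by omega) (by omega)]

end carryStep

theorem Relation.ReflTransGen.eventually_sum_range_eq_of_carryStep {t₀ t : ℕ → ℕ}
    (h : Relation.ReflTransGen carryStep t₀ t) :
    ∀ᶠ N in atTop, ∑ k ∈ range N, t k * 2 ^ k = ∑ k ∈ range N, t₀ k * 2 ^ k := by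
  induction h with
  | refl => exact .of_forall fun _ => rfl
  | tail _ hstep ih => exact (hstep.eventually_sum_range_eq.and ih).mono fun _ h => h.1.trans h.2

theorem sum_range_seed_mul_two_pow (v : ℕ) {N : ℕ} (hN : 1 ≤ N) :
    ∑ k ∈ range N, (if k = 0 then v else 0) * 2 ^ k = v := by
  simp only [ite_mul, zero_mul, sum_ite_eq', mem_range, pow_zero, mul_one]
  exact if_pos hN

theorem stmt_13_general (n v : ℕ) (t : ℕ → ℕ)
    (hreach : Relation.ReflTransGen carryStep (fun j => if j = 0 then v else 0) t)
    (hsupp : ∀ j, n ≤ j → t j = 0) :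
    ∑ j ∈ Finset.range n, t j * 2 ^ j = v := by
  have hstable : ∀ᶠ N in atTop, ∑ k ∈ range N, t k * 2 ^ k = ∑ k ∈ range n, t k * 2 ^ k :=
    eventually_atTop.2 ⟨n, fun N hN => (sum_subset (range_subset_range.2 hN) fun k _ hk =>
      by rw [hsupp k (by simpa using hk), zero_mul]).symm⟩
  obtain ⟨N, hN, hrun, hseed⟩ := (hstable.and (hreach.eventually_sum_range_eq_of_carryStep.and
    (eventually_ge_atTop 1))).exists
  rw [← hN, hrun, sum_range_seed_mul_two_pow v hseed]

/-- In the binary counter, if the seed emits exactly `v` carry tokens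
(initial configuration: `v` tokens at position 0) and the counter runs to quiescence via
carry operations (each replacing two tokens at `j` by one at `j+1`, which preserves
`∑_j t_j · 2^j`), then the final displayed value `∑_j display_j · 2^j` equals `v`,
assuming `v ≤ 2^n - 1` for `n` digit particles. -/
theorem stmt_13 (n v : ℕ) (hv : v ≤ 2 ^ n - 1) (t : ℕ → ℕ)
    (hreach : Relation.ReflTransGen carryStep (fun j => if j = 0 then v else 0) t)
    (hquies : ∀ j, t j ≤ 1) (hsupp : ∀ j, n ≤ j → t j = 0) :
    ∑ j ∈ Finset.range n, t j * 2 ^ j = v :=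
  stmt_13_general n v t hreach hsupp
end
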